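/- arXiv:1402.6444 — 3 statements merged into one kernel-verified Lean document; each statement's English description precedes it below -/
import Mathlib

section
/- Let f : ℝ → ℝ be concave on an open interval (a,b) and let y ∈ (a,b). Then f is differentiable at y if and only if D⁻f(y) equals the right limit lim_{η ↓ y} D⁻f(η). -/
open Filter Set

/-- For a function concave on an open interval `(a,b)` and `y ∈ (a,b)`, `f` is
differentiable at `y` iff the left derivative `D⁻f` is right-continuous at `y`,
i.e. `D⁻f(y) = lim_{η ↓ y} D⁻f(η)`. -/
theorem concave_differentiable_iff_left_deriv_right_limit
    (f : ℝ → ℝ) (a b : ℝ) (hf : ConcaveOn ℝ (Set.Ioo a b) f)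
    (Df : ℝ → ℝ)
    (hDf : ∀ y ∈ Set.Ioo a b,
      Tendsto (fun h : ℝ => (f y - f (y - h)) / h) (nhdsWithin 0 (Set.Ioi 0)) (nhds (Df y)))
    (y : ℝ) (hy : y ∈ Set.Ioo a b) :
    DifferentiableAt ℝ f y ↔
      Tendsto Df (nhdsWithin y (Set.Ioi y)) (nhds (Df y)) := by
  obtain ⟨hay, hyb⟩ := hy
  have hy : y ∈ Ioo a b := ⟨hay, hyb⟩
  -- antitonicity of slopes
  have key : ∀ c ∈ Ioo a b, ∀ u ∈ Ioo a b \ {c}, ∀ v ∈ Ioo a b \ {c}, u ≤ v →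
      slope f c v ≤ slope f c u := fun c hc u hu v hv huv => hf.slope_anti hc hu hv huv
  -- Fact A: Df c is the limit of slopes from the left
  have factA : ∀ c ∈ Ioo a b, Tendsto (slope f c) (nhdsWithin c (Iio c)) (nhds (Df c)) := by
    intro c hc
    have h2 : Tendsto (fun x : ℝ => c - x) (nhdsWithin c (Iio c)) (nhdsWithin 0 (Ioi 0)) := by
      apply tendsto_nhdsWithin_of_tendsto_nhds_of_eventually_within
      · have : Tendsto (fun x : ℝ => c - x) (nhds c) (nhds (c - c)) :=
          tendsto_const_nhds.sub tendsto_id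
        simpa using this.mono_left nhdsWithin_le_nhds
      · filter_upwards [self_mem_nhdsWithin] with x (hx : x < c)
        simpa using hx
    refine ((hDf c hc).comp h2).congr' ?_
    filter_upwards [self_mem_nhdsWithin] with x (hx : x < c)
    show (f c - f (c - (c - x))) / (c - x) = slope f c x
    rw [sub_sub_cancel, slope_def_field, ← neg_sub (f x) (f c), ← neg_sub x c, neg_div_neg_eq]
  -- Fact B: Df c ≤ slope f c x for x < c
  have factB : ∀ c ∈ Ioo a b, ∀ x ∈ Ioo a b, x < c → Df c ≤ slope f c x := by
    intro c hc x hx hxc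
    refine le_of_tendsto (factA c hc) ?_
    filter_upwards [Ioo_mem_nhdsLT hxc] with t ht
    exact key c hc x ⟨hx, hxc.ne⟩ t ⟨⟨hx.1.trans ht.1, ht.2.trans hc.2⟩, ht.2.ne⟩ ht.1.le
  -- Fact C: slope f c z ≤ Df c for z > c
  have factC : ∀ c ∈ Ioo a b, ∀ z ∈ Ioo a b, c < z → slope f c z ≤ Df c := by
    intro c hc z hz hcz
    refine ge_of_tendsto (factA c hc) ?_
    filter_upwards [Ioo_mem_nhdsLT hc.1] with t ht
    exact key c hc t ⟨⟨ht.1, ht.2.trans hc.2⟩, ht.2.ne⟩ z ⟨hz, hcz.ne'⟩ (ht.2.trans hcz).le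
  -- the slope from the right is antitone and bounded above
  set S : ℝ → ℝ := slope f y with hS
  have hSanti : AntitoneOn S (Ioo y b) := by
    intro u hu v hv huv
    exact key y hy u ⟨⟨hay.trans hu.1, hu.2⟩, hu.1.ne'⟩ v ⟨⟨hay.trans hv.1, hv.2⟩, hv.1.ne'⟩ huv
  have hSbdd : BddAbove (S '' Ioo y b) := by
    refine ⟨slope f y ((a + y) / 2), ?_⟩
    rintro _ ⟨v, hv, rfl⟩
    have hx0 : (a + y) / 2 ∈ Ioo a y := ⟨by linarith [hay], by linarith [hay]⟩
    exact key y hy ((a + y) / 2) ⟨⟨hx0.1, hx0.2.trans hyb⟩, hx0.2.ne⟩ v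
      ⟨⟨hay.trans hv.1, hv.2⟩, hv.1.ne'⟩ (hx0.2.le.trans hv.1.le)
  have hne : (Ioo y b).Nonempty := nonempty_Ioo.2 hyb
  set R : ℝ := sSup (S '' Ioo y b) with hRdef
  have hR : Tendsto S (nhdsWithin y (Ioi y)) (nhds R) :=
    hSanti.tendsto_nhdsWithin_Ioo_right hne hSbdd
  -- f is continuous at y
  have hcont : ContinuousAt f y :=
    ((hf.continuousOn isOpen_Ioo) y hy).continuousAt (Ioo_mem_nhds hay hyb)
  -- Fact 3 : Df tends to R from the right
  have fact3 : Tendsto Df (nhdsWithin y (Ioi y)) (nhds R) := by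
    refine tendsto_order.2 ⟨fun l hl => ?_, fun m hm => ?_⟩
    · -- find z with l < S z
      obtain ⟨z, hlz, hz⟩ := ((hR.eventually (lt_mem_nhds hl)).and
        (Ioo_mem_nhdsGT hyb)).exists
      have hzab : z ∈ Ioo a b := ⟨hay.trans hz.1, hz.2⟩
      -- slope f η z tends to slope f y z = S z as η → y⁺
      have htend : Tendsto (fun η => slope f η z) (nhdsWithin y (Ioi y)) (nhds (S z)) := by
        have h1 : Tendsto (fun η : ℝ => (f z - f η) / (z - η)) (nhdsWithin y (Ioi y))
            (nhds ((f z - f y) / (z - y))) := by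
          refine Tendsto.div (tendsto_const_nhds.sub (hcont.tendsto.mono_left
            nhdsWithin_le_nhds)) (tendsto_const_nhds.sub (tendsto_id.mono_left
            nhdsWithin_le_nhds)) (sub_ne_zero.2 hz.1.ne')
        have : S z = (f z - f y) / (z - y) := slope_def_field f y z
        rw [this]
        exact h1.congr fun η => (slope_def_field f η z).symm
      filter_upwards [htend.eventually (lt_mem_nhds hlz), Ioo_mem_nhdsGT hz.1]
        with η h1 h2
      exact h1.trans_le (factC η ⟨hay.trans h2.1, h2.2.trans hz.2⟩ z hzab h2.2)
    · filter_upwards [hR.eventually (gt_mem_nhds hm), Ioo_mem_nhdsGT hyb] with η h1 h2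
      refine lt_of_le_of_lt ?_ h1
      have := factB η ⟨hay.trans h2.1, h2.2⟩ y hy h2.1
      rwa [slope_comm] at this
  constructor
  · intro hdiff
    have hd := hdiff.hasDerivAt
    have hslope := hasDerivAt_iff_tendsto_slope.1 hd
    have hsub : nhdsWithin y (Ioi y) ≤ nhdsWithin y {y}ᶜ :=
      nhdsWithin_mono y fun x hx => mem_compl_singleton_iff.2 (ne_of_gt hx)
    have hsub' : nhdsWithin y (Iio y) ≤ nhdsWithin y {y}ᶜ :=
      nhdsWithin_mono y fun x hx => mem_compl_singleton_iff.2 (ne_of_lt hx)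
    have hRderiv : R = deriv f y :=
      tendsto_nhds_unique hR ((hslope.mono_left hsub).congr fun x => rfl)
    have hLderiv : Df y = deriv f y :=
      tendsto_nhds_unique (factA y hy) (hslope.mono_left hsub')
    rw [hLderiv, ← hRderiv]
    exact fact3
  · intro htendDf
    have hRL : R = Df y := tendsto_nhds_unique fact3 htendDf
    have hRd : HasDerivWithinAt f (Df y) (Ioi y) y := by
      rw [← hRL]
      exact (hasDerivWithinAt_iff_tendsto_slope' notMem_Ioi_self).2 hR
    have hLd : HasDerivWithinAt f (Df y) (Iio y) y :=
      (hasDerivWithinAt_iff_tendsto_slope' notMem_Iio_self).2 (factA y hy)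
    have hUnion : HasDerivWithinAt f (Df y) (Iio y ∪ Ioi y) y := hLd.union hRd
    rw [Iio_union_Ioi] at hUnion
    have : HasDerivAt f (Df y) y :=
      hasDerivAt_iff_tendsto_slope.2
        ((hasDerivWithinAt_iff_tendsto_slope' (by simp)).1 hUnion)
    exact this.differentiableAt
end

section
/- Fix L > 0, n ∈ ℕ, s ∈ [0,T], and a set Γ ⊆ ℝ. Define for y ∈ ℝ: F_n(y) = 2^n ∫_{y - 2^{-n}}^{y} L · 1{v : v + η ∈ Γ for all η ∈ [0, 2^{-n}]} dv. Then F_n(y) ≤ F_{n+1}(y) for every y ∈ ℝ. -/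
open Set MeasureTheory intervalIntegral

/-! Halving the window: the averaging interval `[y - 2δ, y]` splits into two halves of
length `δ`. If `[v, v + 2δ] ⊆ Γ`, then both `[v, v + δ]` and `[v + δ, v + 2δ]` lie in `Γ`; so,
after translating the left half by `δ`, each half of the integrand is dominated by the
integrand at level `δ` on `[y - δ, y]`.

Measurability holds for an arbitrary `Γ`: the complement of `{v | [v, v + δ] ⊆ Γ}` is the union
of the intervals `[x - δ, x]` with `x ∉ Γ`, which differs from the open union of their interiors
only by endpoints; the right endpoints outside the open union are `δ`-separated, as are the left
ones, so both sets are countable. -/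

def forwardCore (δ : ℝ) (Γ : Set ℝ) : Set ℝ :=
  {v | ∀ η ∈ Icc 0 δ, v + η ∈ Γ}

lemma countable_of_separated {δ : ℝ} (hδ : 0 < δ) {E : Set ℝ}
    (h : ∀ p ∈ E, ∀ q ∈ E, p < q → δ ≤ q - p) : E.Countable := by
  have hinj : InjOn (fun p => ⌊p / δ⌋) E := by
    intro p hp q hq hpq
    have hclose : |p - q| < δ := by
      have := Int.abs_sub_lt_one_of_floor_eq_floor hpq
      rwa [← sub_div, abs_div, abs_of_pos hδ, div_lt_one hδ] at this
    by_contra hne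
    rcases lt_or_gt_of_ne hne with hlt | hlt
    · linarith [h p hp q hq hlt, abs_sub_comm p q, le_abs_self (q - p)]
    · linarith [h q hq p hp hlt, le_abs_self (p - q)]
  exact (mapsTo_univ _ E).countable_of_injOn hinj countable_univ

lemma measurableSet_biUnion_Icc_sub_self {δ : ℝ} (hδ : 0 < δ) (S : Set ℝ) :
    MeasurableSet (⋃ x ∈ S, Icc (x - δ) x) := by
  set U := ⋃ x ∈ S, Icc (x - δ) x
  set V := ⋃ x ∈ S, Ioo (x - δ) x
  have hVU : V ⊆ U := iUnion₂_mono fun _ _ => Ioo_subset_Icc_self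
  have hendpoints : U \ V ⊆ (S \ V) ∪ ((· - δ) '' S \ V) := by
    rintro p ⟨hpU, hpV⟩
    obtain ⟨x, hxS, hx⟩ := mem_iUnion₂.mp hpU
    rcases eq_endpoints_or_mem_Ioo_of_mem_Icc hx with rfl | rfl | hIoo
    · exact Or.inr ⟨⟨x, hxS, rfl⟩, hpV⟩
    · exact Or.inl ⟨hxS, hpV⟩
    · exact absurd (mem_iUnion₂.mpr ⟨x, hxS, hIoo⟩) hpV
  have hright : (S \ V).Countable := by
    refine countable_of_separated hδ fun p hp q hq hpq => ?_
    by_contra! hlt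
    exact hp.2 (mem_iUnion₂.mpr ⟨q, hq.1, by linarith, hpq⟩)
  have hleft : ((· - δ) '' S \ V).Countable := by
    refine countable_of_separated hδ fun p hp q hq hpq => ?_
    by_contra! hlt
    obtain ⟨x, hxS, rfl⟩ := hp.1
    exact hq.2 (mem_iUnion₂.mpr ⟨x, hxS, hpq, by linarith⟩)
  rw [← union_sdiff_cancel hVU]
  exact (isOpen_biUnion fun _ _ => isOpen_Ioo).measurableSet.union
    ((hright.union hleft).mono hendpoints).measurableSet

lemma forwardCore_eq_compl_biUnion_Icc (δ : ℝ) (Γ : Set ℝ) :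
    forwardCore δ Γ = (⋃ x ∈ Γᶜ, Icc (x - δ) x)ᶜ := by
  ext v
  simp only [forwardCore, mem_ofPred_eq, mem_compl_iff, mem_iUnion, mem_Icc, exists_prop,
    not_exists, not_and]
  constructor
  · intro hv x hx h₁ h₂
    exact hx (by simpa using hv (x - v) ⟨by linarith, by linarith⟩)
  · intro hv η ⟨h₁, h₂⟩
    by_contra hmem
    exact hv (v + η) hmem (by linarith) (by linarith)

lemma measurableSet_forwardCore {δ : ℝ} (hδ : 0 < δ) (Γ : Set ℝ) :
    MeasurableSet (forwardCore δ Γ) := by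
  rw [forwardCore_eq_compl_biUnion_Icc]
  exact (measurableSet_biUnion_Icc_sub_self hδ Γᶜ).compl

lemma forwardCore_antitone (Γ : Set ℝ) : Antitone (forwardCore · Γ) :=
  fun _ _ hδ _ hv η hη => hv η ⟨hη.1, hη.2.trans hδ⟩

lemma forwardCore_add_subset_preimage {a : ℝ} (ha : 0 ≤ a) (b : ℝ) (Γ : Set ℝ) :
    forwardCore (a + b) Γ ⊆ (· + a) ⁻¹' forwardCore b Γ := by
  intro v hv η hη
  simpa [add_assoc] using hv (a + η) ⟨by linarith [hη.1], by linarith [hη.2]⟩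

lemma intervalIntegrable_indicator_const {A : Set ℝ} (hA : MeasurableSet A) (L a b : ℝ) :
    IntervalIntegrable (A.indicator fun _ => L) volume a b :=
  (((locallyIntegrable_const L).indicator hA).integrableOn_isCompact
    isCompact_uIcc).intervalIntegrable

lemma integral_le_two_mul_integral_of_le_of_le_shift {f g : ℝ → ℝ} {δ : ℝ} (hδ : 0 ≤ δ)
    (hf : ∀ a b, IntervalIntegrable f volume a b) (hg : ∀ a b, IntervalIntegrable g volume a b)
    (hfg : ∀ v, f v ≤ g v) (hfg_shift : ∀ v, f v ≤ g (v + δ)) (y : ℝ) :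
    ∫ v in (y - (δ + δ))..y, f v ≤ 2 * ∫ v in (y - δ)..y, g v := by
  have hleft : ∫ v in (y - (δ + δ))..(y - δ), f v = ∫ v in (y - δ)..y, f (v - δ) := by
    rw [integral_comp_sub_right f δ, sub_sub]
  have hshift : IntervalIntegrable (fun v => f (v - δ)) volume (y - δ) y := by
    simpa using (hf (y - δ - δ) (y - δ)).comp_sub_right δ
  have hle : y - δ ≤ y := by linarith
  calc ∫ v in (y - (δ + δ))..y, f v
      = (∫ v in (y - δ)..y, f (v - δ)) + ∫ v in (y - δ)..y, f v := by
        rw [← integral_add_adjacent_intervals (hf _ _) (hf _ _), hleft]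
    _ ≤ (∫ v in (y - δ)..y, g v) + ∫ v in (y - δ)..y, g v := by
        gcongr
        · exact integral_mono_on hle hshift (hg _ _) fun v _ => by simpa using hfg_shift (v - δ)
        · exact integral_mono_on hle (hf _ _) (hg _ _) fun v _ => hfg v
    _ = 2 * ∫ v in (y - δ)..y, g v := by ring

lemma integral_indicator_forwardCore_double_le {δ L : ℝ} (hδ : 0 < δ) (hL : 0 ≤ L)
    (Γ : Set ℝ) (y : ℝ) :
    ∫ v in (y - (δ + δ))..y, (forwardCore (δ + δ) Γ).indicator (fun _ => L) v
      ≤ 2 * ∫ v in (y - δ)..y, (forwardCore δ Γ).indicator (fun _ => L) v := by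
  refine integral_le_two_mul_integral_of_le_of_le_shift hδ.le
    (intervalIntegrable_indicator_const (measurableSet_forwardCore (by positivity) Γ) L)
    (intervalIntegrable_indicator_const (measurableSet_forwardCore hδ Γ) L)
    (fun v => indicator_le_indicator_of_subset (forwardCore_antitone Γ (by linarith))
      (fun _ => hL) v) (fun v => ?_) y
  exact (indicator_le_indicator_of_subset (forwardCore_add_subset_preimage hδ.le δ Γ)
    (fun _ => hL) v).trans_eq (indicator_comp_right (g := fun _ => L) (· + δ))

theorem averaged_indicator_monotone_general
    (L : ℝ) (hL : 0 < L) (Γ : Set ℝ) (n : ℕ) (y : ℝ) :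
    (2 : ℝ) ^ n * ∫ v in (y - (2 : ℝ) ^ (-(n : ℤ)))..y,
        Set.indicator {v : ℝ | ∀ η ∈ Set.Icc (0 : ℝ) ((2 : ℝ) ^ (-(n : ℤ))), v + η ∈ Γ}
          (fun _ => L) v
      ≤ (2 : ℝ) ^ (n + 1) * ∫ v in (y - (2 : ℝ) ^ (-((n : ℤ) + 1)))..y,
        Set.indicator {v : ℝ | ∀ η ∈ Set.Icc (0 : ℝ) ((2 : ℝ) ^ (-((n : ℤ) + 1))), v + η ∈ Γ}
          (fun _ => L) v := by
  set δ : ℝ := (2 : ℝ) ^ (-((n : ℤ) + 1))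
  have hδ : 0 < δ := by positivity
  have hdouble : (2 : ℝ) ^ (-(n : ℤ)) = δ + δ := by
    rw [← two_mul, ← zpow_one_add₀ two_ne_zero]
    ring_nf
  rw [hdouble, pow_succ, mul_assoc]
  exact mul_le_mul_of_nonneg_left (integral_indicator_forwardCore_double_le hδ hL.le Γ y)
    (by positivity)

/-- The averaged indicator `F_n(y) = 2^n ∫_{y-2^{-n}}^y L·1{v : v+η ∈ Γ ∀ η ∈ [0,2^{-n}]} dv`
is nondecreasing in `n`. -/
theorem averaged_indicator_monotone
    (L : ℝ) (hL : 0 < L) (Γ : Set ℝ) (hΓ : MeasurableSet Γ) (n : ℕ) (y : ℝ) :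
    (2 : ℝ) ^ n * ∫ v in (y - (2 : ℝ) ^ (-(n : ℤ)))..y,
        Set.indicator {v : ℝ | ∀ η ∈ Set.Icc (0 : ℝ) ((2 : ℝ) ^ (-(n : ℤ))), v + η ∈ Γ}
          (fun _ => L) v
      ≤ (2 : ℝ) ^ (n + 1) * ∫ v in (y - (2 : ℝ) ^ (-((n : ℤ) + 1)))..y,
        Set.indicator {v : ℝ | ∀ η ∈ Set.Icc (0 : ℝ) ((2 : ℝ) ^ (-((n : ℤ) + 1))), v + η ∈ Γ}
          (fun _ => L) v :=
  averaged_indicator_monotone_general L hL Γ n y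
end

section
/- Let u : [t₀,T] → [0,L] be measurable, and define σ_L = inf{ t ∈ [t₀,T] : ∫_{t₀}^{t} u(s) ds ≤ c - L(T - t) } (with inf ∅ = +∞), where c is a constant. Suppose σ_L ≤ T and that u(r) = L for almost every r with ∫_{t₀}^{r} u(s) ds ≤ c - L(T - r). Then for every ε > 0, λ({ s ∈ [σ_L, (σ_L + ε) ∧ T] : u(s) > 0 }) > 0 whenever σ_L < T, i.e. u is strictly positive on a set of positive measure in every right neighborhood of σ_L. -/
open Filter Set MeasureTheory intervalIntegral

/-!
Since `u ≤ L`, the slack `c - L (T - t) - ∫_{t₀}^t u` is nondecreasing in `t`, so the constraint,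
which holds at `σ_L` (the constraint set is closed), holds on all of `[σ_L, T]`. Hence `u = L > 0`
a.e. on the nondegenerate interval `[σ_L, min (σ_L + ε) T]`.
-/

theorem measure_sep_pos_of_ae_restrict {α : Type*} [MeasurableSpace α] {μ : Measure α}
    {s : Set α} {p : α → Prop} (hs : MeasurableSet s) (hμs : μ s ≠ 0)
    (hp : ∀ᵐ x ∂μ.restrict s, p x) : 0 < μ {x ∈ s | p x} := by
  refine pos_iff_ne_zero.2 fun h0 => hμs ?_
  have hnot : ∀ᵐ x ∂μ.restrict s, x ∉ {x ∈ s | p x} :=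
    ae_restrict_of_ae (measure_eq_zero_iff_ae_notMem.1 h0)
  have hfalse : ∀ᵐ _ ∂μ.restrict s, False := by
    filter_upwards [hp, hnot, ae_restrict_mem hs] with x hpx hx hxs using hx ⟨hxs, hpx⟩
  exact Measure.restrict_eq_zero.1 (ae_eq_bot.1 (eventually_false_iff_eq_bot.1 hfalse))

theorem intervalIntegrable_of_measurable_of_mem_Icc {u : ℝ → ℝ} {L : ℝ} (hmeas : Measurable u)
    (hu : ∀ r, u r ∈ Icc 0 L) (a b : ℝ) : IntervalIntegrable u volume a b := by
  refine (intervalIntegrable_const (c := L)).mono_fun' hmeas.aestronglyMeasurable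
    (Eventually.of_forall fun x => ?_)
  show ‖u x‖ ≤ L
  rw [Real.norm_of_nonneg (hu x).1]
  exact (hu x).2

theorem antitone_intervalIntegral_sub_mul {u : ℝ → ℝ} {L : ℝ} (a : ℝ)
    (hint : ∀ s t, IntervalIntegrable u volume s t) (hu : ∀ r, u r ≤ L) :
    Antitone fun t => (∫ s in a..t, u s) - L * t := by
  intro s t hst
  have hinc : (∫ r in s..t, u r) ≤ L * (t - s) := by
    simpa [mul_comm] using
      integral_mono_on hst (hint s t) intervalIntegrable_const fun x _ => hu x
  have hsplit := integral_add_adjacent_intervals (hint a s) (hint s t)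
  dsimp only
  linarith

theorem control_positive_after_sigmaL_general
    (t₀ T L c : ℝ) (hL : 0 < L)
    (u : ℝ → ℝ) (humeas : Measurable u) (hu : ∀ r, u r ∈ Set.Icc (0 : ℝ) L)
    (S : Set ℝ)
    (hS : S = {t ∈ Set.Icc t₀ T | (∫ s in t₀..t, u s) ≤ c - L * (T - t)})
    (hSne : S.Nonempty)
    (σL : ℝ) (hσL : σL = sInf S)
    (hfull : ∀ᵐ r ∂(volume.restrict (Set.Icc t₀ T)),
      (∫ s in t₀..r, u s) ≤ c - L * (T - r) → u r = L) :
    σL < T → ∀ ε > 0,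
      0 < volume {s ∈ Set.Icc σL (min (σL + ε) T) | 0 < u s} := by
  intro hσT ε hε
  have hint := intervalIntegrable_of_measurable_of_mem_Icc humeas hu
  have hSclosed : IsClosed S := hS ▸
    isClosed_Icc.inter (isClosed_le (continuous_primitive hint t₀) (by fun_prop))
  have hσS : σL ∈ S := hσL ▸ hSclosed.csInf_mem hSne ⟨t₀, fun t ht => (hS ▸ ht).1.1⟩
  obtain ⟨⟨ht₀σ, -⟩, hσbudget⟩ := hS ▸ hσS
  have hbudget : ∀ t, σL ≤ t → (∫ s in t₀..t, u s) ≤ c - L * (T - t) := fun t ht => by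
    have := antitone_intervalIntegral_sub_mul t₀ hint (fun r => (hu r).2) ht
    dsimp only at this
    linarith
  have hσm : σL < min (σL + ε) T := lt_min (by linarith) hσT
  have hfull' := ae_restrict_of_ae_restrict_of_subset
    (Icc_subset_Icc ht₀σ (min_le_right (σL + ε) T)) hfull
  refine measure_sep_pos_of_ae_restrict measurableSet_Icc (by simpa using hσm) ?_
  filter_upwards [hfull', ae_restrict_mem measurableSet_Icc] with s hs hmem
  exact hs (hbudget s hmem.1) ▸ hL

/-- If after the exit time `σ_L` the constraint `∫_{t₀}^t u ≤ c - L(T-t)` forces `u = L`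
almost everywhere, then `u` is strictly positive on a set of positive Lebesgue measure in
every right neighborhood of `σ_L`, provided `σ_L < T`. -/
theorem control_positive_after_sigmaL
    (t₀ T L c : ℝ) (ht : t₀ < T) (hL : 0 < L)
    (u : ℝ → ℝ) (humeas : Measurable u) (hu : ∀ r, u r ∈ Set.Icc (0 : ℝ) L)
    (S : Set ℝ)
    (hS : S = {t ∈ Set.Icc t₀ T | (∫ s in t₀..t, u s) ≤ c - L * (T - t)})
    (hSne : S.Nonempty)
    (σL : ℝ) (hσL : σL = sInf S) (hσLT : σL ≤ T)
    (hfull : ∀ᵐ r ∂(volume.restrict (Set.Icc t₀ T)),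
      (∫ s in t₀..r, u s) ≤ c - L * (T - r) → u r = L) :
    σL < T → ∀ ε > 0,
      0 < volume {s ∈ Set.Icc σL (min (σL + ε) T) | 0 < u s} :=
  control_positive_after_sigmaL_general t₀ T L c hL u humeas hu S hS hSne σL hσL hfull
end
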